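/- Let G be a countable discrete abelian group, let Y = (Y, ν, (S_g)_{g∈G}) be a G-system, let U be a compact metrizable abelian group with Haar probability measure, and let ρ : G × Y → U be a cocycle which is a phase polynomial of degree < k (derivatives taken in the group U). Form the skew product X = Y × U with measure ν × Haar and action T_g(y, u) = (S_g y, ρ(g, y)·u), and assume X is ergodic. Let m ≥ 0 and let f : G × X → S¹ be a function of the form f(g, x) = p(g, x) · F(T_g x) · conj(F(x)), where p : G × X → S¹ is a phase polynomial of degree < m and F : X → S¹ is measurable, and suppose f is invariant under the vertical rotations V_u(y, t) = (y, u·t) for every u ∈ U, i.e. f(g, V_u x) = f(g, x) a.e. for all g, u. Then there exist a constant C depending only on k and m, a phase polynomial p' : G × X → S¹ of degree < C, and a measurable F' : X → S¹, such that p' and F' are both invariant under all the vertical rotations V_u and f(g, x) = p'(g, x) · F'(T_g x) · conj(F'(x)) for all g ∈ G and a.e. x ∈ X. -/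

import Mathlib

open MeasureTheory
open scoped symmDiff

noncomputable instance : MeasurableSpace Circle := borel Circle
instance : BorelSpace Circle := ⟨rfl⟩

/-- `φ : X → H` is a phase polynomial of degree `< k` with respect to the action `T` of `G`
on the measure space `(X, μ)`: all `k`-fold multiplicative derivatives
`Δ_{h₁} ⋯ Δ_{h_k} φ` equal `1` almost everywhere, where `Δ_g φ = (φ ∘ T_g) · φ⁻¹`. -/
def PhasePoly {G X H : Type*} [MeasurableSpace X] [CommGroup H]
    (T : G → X → X) (μ : Measure X) : ℕ → (X → H) → Prop
  | 0, φ => ∀ᵐ x ∂μ, φ x = 1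
  | (k + 1), φ => ∀ g : G, PhasePoly T μ k (fun x => φ (T g x) * (φ x)⁻¹)

/-- The action `T` of `G` on `(X, μ)` is ergodic: every measurable set that is invariant
modulo null sets under every `T g` has measure `0` or `1`. -/
def IsErgodicAction {G X : Type*} [MeasurableSpace X] (T : G → X → X)
    (μ : Measure X) : Prop :=
  ∀ A : Set X, MeasurableSet A → (∀ g : G, μ ((T g ⁻¹' A) ∆ A) = 0) → μ A = 0 ∨ μ A = 1


/-!
Write `Δ_h` for the multiplicative derivative along the skew product `T_h`, `V_u` for the
vertical rotations and `M_σ q = (q ∘ W_σ) · q⁻¹` for the derivative along the twist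
`W_σ (y, t) = (y, σ y · t)`.

By ergodicity a phase polynomial of degree `< d` has vertical degree `< d`. Since
`Δ_g F = f_g · p_g⁻¹` with `f_g` vertically invariant, the vertical derivatives of `F` are phase
polynomials, so `F` has finite vertical degree. Twisting lowers the vertical degree, and the
twisted Leibniz rule `Δ_h (M_σ q) = M_{σ ∘ S_h} (Δ_h q) · M_σ (M_τ q) · M_τ q` with `τ = Δ_h σ`
shows, by induction on the vertical degree of `q`, the degree of `σ` and the degree of `Δ q`, that
`M_σ q` is a phase polynomial whenever `σ` is one on `Y`. Because
`Δ_h q(·, t) = (Δ_h q)(·, t) · M_{ρ_h⁻¹} (q ∘ T_h) (·, t)`, a second induction shows that almost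
every section `q(·, t)` of a phase polynomial `q` of finite vertical degree is a phase polynomial.
For such a `t`, `F' = F(·, t)` is a solution: `f / Δ F'` is the section at `t` of
`p · (M_{ρ⁻¹} (F ∘ T))⁻¹`.
-/

open Filter Function

section MulDeriv

variable {X H : Type*} [CommGroup H] {W W' C : X → X} {q r : X → H}

def mulDeriv (W : X → X) (q : X → H) : X → H := fun x => q (W x) * (q x)⁻¹

@[simp]
lemma mulDeriv_apply (x : X) : mulDeriv W q x = q (W x) * (q x)⁻¹ := rfl

lemma mulDeriv_mul : mulDeriv W (q * r) = mulDeriv W q * mulDeriv W r := by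
  ext x
  simp only [mulDeriv_apply, Pi.mul_apply, mul_inv, mul_mul_mul_comm]

lemma mulDeriv_inv : mulDeriv W q⁻¹ = (mulDeriv W q)⁻¹ := by
  ext x
  simp only [mulDeriv_apply, Pi.inv_apply, mul_inv]

lemma mulDeriv_div : mulDeriv W (q / r) = mulDeriv W q / mulDeriv W r := by
  simp only [div_eq_mul_inv, mulDeriv_mul, mulDeriv_inv]

lemma mulDeriv_mul_self : mulDeriv W q * q = q ∘ W := by
  ext x
  simp

lemma mulDeriv_comm (h : ∀ x, W (W' x) = W' (W x)) :
    mulDeriv W (mulDeriv W' q) = mulDeriv W' (mulDeriv W q) := by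
  ext x
  apply Additive.ofMul.injective
  simp only [mulDeriv_apply, h, ofMul_mul, ofMul_inv]
  abel

lemma mulDeriv_mulDeriv_of_semiconj (h : ∀ x, W (C (W' x)) = W' (W x)) :
    mulDeriv W (mulDeriv W' q) =
      mulDeriv (C ∘ W') (mulDeriv W q) * mulDeriv W' (mulDeriv C q) * mulDeriv C q := by
  ext x
  apply Additive.ofMul.injective
  simp only [mulDeriv_apply, Pi.mul_apply, comp_apply, h, ofMul_mul, ofMul_inv]
  abel

lemma Measurable.mulDeriv [MeasurableSpace X] [MeasurableSpace H] [MeasurableMul₂ H]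
    [MeasurableInv H] (hq : Measurable q) (hW : Measurable W) : Measurable (mulDeriv W q) :=
  (hq.comp hW).mul hq.inv

end MulDeriv

section PhasePoly

variable {G X H : Type*} [MeasurableSpace X] {μ : Measure X} [CommGroup H] {T : G → X → X}
  {W : X → X} {d : ℕ} {q r : X → H}

lemma phasePoly_succ_iff :
    PhasePoly T μ (d + 1) q ↔ ∀ g, PhasePoly T μ d (mulDeriv (T g) q) := Iff.rfl

lemma mulDeriv_ae_eq_one (hW : Measure.QuasiMeasurePreserving W μ μ) (hq : q =ᵐ[μ] 1) :
    mulDeriv W q =ᵐ[μ] 1 := by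
  filter_upwards [hq, hW.ae hq] with x hx hWx
  simp_all

namespace PhasePoly

lemma congr (hT : ∀ g, Measure.QuasiMeasurePreserving (T g) μ μ) (h : PhasePoly T μ d q)
    (hqr : q =ᵐ[μ] r) : PhasePoly T μ d r := by
  induction d generalizing q r with
  | zero => filter_upwards [h, hqr] with x hx hqrx using hqrx ▸ hx
  | succ d ih => exact fun g => ih (h g) (((hT g).ae_eq hqr).mul hqr.inv)

lemma mul (hq : PhasePoly T μ d q) (hr : PhasePoly T μ d r) : PhasePoly T μ d (q * r) := by
  induction d generalizing q r with
  | zero => filter_upwards [hq, hr] with x hqx hrx using by simp [hqx, hrx]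
  | succ d ih =>
    refine phasePoly_succ_iff.2 fun g => ?_
    rw [mulDeriv_mul]
    exact ih (hq g) (hr g)

lemma inv (hq : PhasePoly T μ d q) : PhasePoly T μ d q⁻¹ := by
  induction d generalizing q with
  | zero => filter_upwards [hq] with x hqx using by simp [hqx]
  | succ d ih =>
    refine phasePoly_succ_iff.2 fun g => ?_
    rw [mulDeriv_inv]
    exact ih (hq g)

lemma mulDeriv_of_commute (hW : Measure.QuasiMeasurePreserving W μ μ)
    (hWT : ∀ g x, W (T g x) = T g (W x)) (hq : PhasePoly T μ d q) :
    PhasePoly T μ d (mulDeriv W q) := by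
  induction d generalizing q with
  | zero => exact mulDeriv_ae_eq_one hW hq
  | succ d ih =>
    refine phasePoly_succ_iff.2 fun g => ?_
    rw [mulDeriv_comm fun x => (hWT g x).symm]
    exact ih (hq g)

lemma comp_of_commute (hW : Measure.QuasiMeasurePreserving W μ μ)
    (hWT : ∀ g x, W (T g x) = T g (W x)) (hq : PhasePoly T μ d q) :
    PhasePoly T μ d (q ∘ W) := by
  rw [← mulDeriv_mul_self]
  exact (hq.mulDeriv_of_commute hW hWT).mul hq

variable (hT : ∀ g, Measure.QuasiMeasurePreserving (T g) μ μ)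
include hT

lemma succ (hq : PhasePoly T μ d q) : PhasePoly T μ (d + 1) q := by
  induction d generalizing q with
  | zero => exact fun g => mulDeriv_ae_eq_one (hT g) hq
  | succ d ih => exact fun g => ih (hq g)

lemma mono {d' : ℕ} (hdd : d ≤ d') (hq : PhasePoly T μ d q) : PhasePoly T μ d' q := by
  induction hdd with
  | refl => exact hq
  | step _ ih => exact ih.succ hT

lemma of_div (hq : PhasePoly T μ (d + 1) q) (hqr : PhasePoly T μ 1 (q / r)) :
    PhasePoly T μ (d + 1) r := by
  rw [← div_div_cancel q r, div_eq_mul_inv]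
  exact hq.mul (hqr.mono hT (Nat.le_add_left 1 d)).inv

lemma mulDeriv_self (hq : PhasePoly T μ d q) (g : G) : PhasePoly T μ d (mulDeriv (T g) q) := by
  cases d with
  | zero => exact hq.succ hT g
  | succ d => exact (hq g).succ hT

end PhasePoly

end PhasePoly

section Ergodic

variable {G G' X H : Type*} [MeasurableSpace X] {μ : Measure X} [IsProbabilityMeasure μ]
  {T : G → X → X} {V : G' → X → X}

theorem IsErgodicAction.ae_eq_const {Z : Type*} [MeasurableSpace Z]
    [MeasurableSpace.CountablySeparated Z] [Nonempty Z] {φ : X → Z}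
    (herg : IsErgodicAction T μ) (hφ : Measurable φ) (hinv : ∀ g, φ ∘ T g =ᵐ[μ] φ) :
    ∃ c, φ =ᵐ[μ] const X c := by
  refine exists_eventuallyEq_const_of_forall_separating MeasurableSet fun B hB => ?_
  have hnull : ∀ g, μ ((T g ⁻¹' (φ ⁻¹' B)) ∆ (φ ⁻¹' B)) = 0 := fun g => by
    refine measure_mono_null (fun x hx => ?_) (ae_iff.1 (hinv g))
    intro (hφx : φ (T g x) = φ x)
    simp only [Set.mem_symmDiff, Set.mem_preimage, hφx] at hx
    tauto
  rcases herg _ (hφ hB) hnull with h0 | h1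
  · exact .inr (measure_eq_zero_iff_ae_notMem.1 h0)
  · exact .inl ((mem_ae_iff_prob_eq_one (hφ hB)).2 h1)

variable [CommGroup H] [MeasurableSpace H] [MeasurableMul₂ H] [MeasurableInv H]
  [MeasurableSpace.CountablySeparated H] {W : X → X} {d : ℕ} {q : X → H}
  (herg : IsErgodicAction T μ) (hT : ∀ g, Measurable (T g))
include herg hT

/-- By ergodicity a phase polynomial of degree `< 1` is a.e. constant, hence killed by
`mulDeriv W`. -/
lemma PhasePoly.mulDeriv_of_isErgodicAction (hW : Measure.QuasiMeasurePreserving W μ μ)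
    (hWT : ∀ g x, W (T g x) = T g (W x)) (hq : Measurable q) (h : PhasePoly T μ (d + 1) q) :
    PhasePoly T μ d (mulDeriv W q) := by
  induction d generalizing q with
  | zero =>
    obtain ⟨c, hc⟩ :=
      herg.ae_eq_const hq fun g => Eventually.mono (h g) fun x hx => mul_inv_eq_one.1 hx
    filter_upwards [hc, hW.ae_eq hc] with x hx hWx
    simp_all
  | succ d ih =>
    refine phasePoly_succ_iff.2 fun g => ?_
    rw [mulDeriv_comm fun x => (hWT g x).symm]
    exact ih (hq.mulDeriv (hT g)) (h g)

lemma PhasePoly.of_isErgodicAction (hV : ∀ u, Measure.QuasiMeasurePreserving (V u) μ μ)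
    (hVT : ∀ u g x, V u (T g x) = T g (V u x)) (hq : Measurable q) (h : PhasePoly T μ d q) :
    PhasePoly V μ d q := by
  induction d generalizing q with
  | zero => exact h
  | succ d ih =>
    exact fun u => ih (hq.mulDeriv (hV u).measurable)
      (h.mulDeriv_of_isErgodicAction herg hT (hV u) (hVT u) hq)

end Ergodic

section ModInvariant

variable {G G' X H : Type*} [MeasurableSpace X] {μ : Measure X} [CommGroup H] [MeasurableSpace H]
  {T : G → X → X} {V : G' → X → X} {d : ℕ} {q q' : X → H}

def PhasePolyModInvariant (T : G → X → X) (V : G' → X → X) (μ : Measure X) (d : ℕ)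
    (q : X → H) : Prop :=
  ∃ r : X → H, Measurable r ∧ PhasePoly T μ d r ∧ PhasePoly V μ 1 (q / r)

lemma PhasePoly.phasePolyModInvariant (hq : Measurable q) (h : PhasePoly T μ d q) :
    PhasePolyModInvariant T V μ d q :=
  ⟨q, hq, h, fun u => by filter_upwards with x using by simp⟩

namespace PhasePolyModInvariant

lemma mul [MeasurableMul₂ H] (hq : PhasePolyModInvariant T V μ d q)
    (hq' : PhasePolyModInvariant T V μ d q') : PhasePolyModInvariant T V μ d (q * q') := by
  obtain ⟨r, hr, hrd, hw⟩ := hq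
  obtain ⟨r', hr', hrd', hw'⟩ := hq'
  refine ⟨r * r', hr.mul hr', hrd.mul hrd', ?_⟩
  rw [mul_div_mul_comm]
  exact hw.mul hw'

variable (hT : ∀ g, Measure.QuasiMeasurePreserving (T g) μ μ)
  (hVT : ∀ u g x, V u (T g x) = T g (V u x))
include hT hVT

lemma mulDeriv_self [MeasurableMul₂ H] [MeasurableInv H] (h : PhasePolyModInvariant T V μ d q)
    (g : G) : PhasePolyModInvariant T V μ d (mulDeriv (T g) q) := by
  obtain ⟨r, hr, hrd, hw⟩ := h
  refine ⟨mulDeriv (T g) r, hr.mulDeriv (hT g).measurable, hrd.mulDeriv_self hT g, ?_⟩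
  rw [← mulDeriv_div]
  exact hw.mulDeriv_of_commute (hT g) fun u x => (hVT u g x).symm

lemma phasePoly_mulDeriv (hV : ∀ u, Measure.QuasiMeasurePreserving (V u) μ μ)
    (h : PhasePolyModInvariant T V μ d q) (u : G') :
    PhasePoly T μ d (mulDeriv (V u) q) := by
  obtain ⟨r, -, hrd, hw⟩ := h
  have hqr : mulDeriv (V u) q = mulDeriv (V u) (q / r) * mulDeriv (V u) r := by
    rw [← mulDeriv_mul, div_mul_cancel]
  refine (hrd.mulDeriv_of_commute (hV u) (hVT u)).congr hT ?_
  filter_upwards [hw u] with x (hx : mulDeriv (V u) (q / r) x = 1)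
  rw [hqr, Pi.mul_apply, hx, one_mul]

end PhasePolyModInvariant

theorem phasePoly_of_forall_phasePolyModInvariant_mulDeriv [IsProbabilityMeasure μ]
    [MeasurableMul₂ H] [MeasurableInv H] [MeasurableSpace.CountablySeparated H]
    (herg : IsErgodicAction T μ) (hT : ∀ g, Measure.QuasiMeasurePreserving (T g) μ μ)
    (hV : ∀ u, Measure.QuasiMeasurePreserving (V u) μ μ)
    (hVT : ∀ u g x, V u (T g x) = T g (V u x)) (hq : Measurable q)
    (h : ∀ g, PhasePolyModInvariant T V μ d (mulDeriv (T g) q)) :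
    PhasePoly V μ (d + 2) q := fun u =>
  have hVq : PhasePoly T μ (d + 1) (mulDeriv (V u) q) := phasePoly_succ_iff.2 fun g => by
    rw [mulDeriv_comm fun x => (hVT u g x).symm]
    exact (h g).phasePoly_mulDeriv hT hVT hV u
  hVq.of_isErgodicAction herg (fun g => (hT g).measurable) hV hVT (hq.mulDeriv (hV u).measurable)

end ModInvariant

section SkewProduct

variable {G Y U H : Type*} [CommGroup U] [CommGroup H]

def twist (σ : Y → U) (x : Y × U) : Y × U := (x.1, σ x.1 * x.2)

def vertRot (u : U) : Y × U → Y × U := twist fun _ => u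

def skewProduct (S : G → Y → Y) (ρ : G → Y → U) (g : G) (x : Y × U) : Y × U :=
  (S g x.1, ρ g x.1 * x.2)

variable {S : G → Y → Y} {ρ : G → Y → U} {σ τ : Y → U}

@[simp]
lemma twist_apply (x : Y × U) : twist σ x = (x.1, σ x.1 * x.2) := rfl

@[simp]
lemma vertRot_apply (u : U) (x : Y × U) : vertRot u x = (x.1, u * x.2) := rfl

@[simp]
lemma skewProduct_apply (g : G) (x : Y × U) : skewProduct S ρ g x = (S g x.1, ρ g x.1 * x.2) :=
  rfl

lemma twist_vertRot (u : U) (x : Y × U) : twist σ (vertRot u x) = vertRot u (twist σ x) := by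
  simp [mul_left_comm]

lemma skewProduct_vertRot (g : G) (u : U) (x : Y × U) :
    skewProduct S ρ g (vertRot u x) = vertRot u (skewProduct S ρ g x) := by
  simp [mul_left_comm]

lemma twist_comp_twist : twist τ ∘ twist σ = twist (τ * σ) := by
  ext x <;> simp [mul_assoc]

lemma skewProduct_twist_mulDeriv (h : G) (x : Y × U) :
    skewProduct S ρ h (twist (mulDeriv (S h) σ) (twist σ x)) = twist σ (skewProduct S ρ h x) := by
  simp only [skewProduct_apply, twist_apply, mulDeriv_apply, mul_assoc, inv_mul_cancel_left]
  rw [mul_left_comm]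

lemma mulDeriv_skewProduct_mulDeriv_twist (h : G) (q : Y × U → H) :
    mulDeriv (skewProduct S ρ h) (mulDeriv (twist σ) q) =
      mulDeriv (twist (mulDeriv (S h) σ * σ)) (mulDeriv (skewProduct S ρ h) q) *
        mulDeriv (twist σ) (mulDeriv (twist (mulDeriv (S h) σ)) q) *
          mulDeriv (twist (mulDeriv (S h) σ)) q := by
  rw [← twist_comp_twist]
  exact mulDeriv_mulDeriv_of_semiconj (skewProduct_twist_mulDeriv h)

lemma mulDeriv_skewProduct_section (h : G) (q : Y × U → H) (t : U) :
    mulDeriv (skewProduct S ρ h) (fun x => q (x.1, t)) =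
      (fun x => mulDeriv (skewProduct S ρ h) q (x.1, t)) *
        fun x => mulDeriv (twist (ρ h)⁻¹) (q ∘ skewProduct S ρ h) (x.1, t) := by
  ext x
  apply Additive.ofMul.injective
  simp only [mulDeriv_apply, Pi.mul_apply, comp_apply, skewProduct_apply, twist_apply,
    Pi.inv_apply, mul_inv_cancel_left, ofMul_mul, ofMul_inv]
  abel

variable [MeasurableSpace Y] [MeasurableSpace U] {ν : Measure Y} {mU : Measure U}

lemma phasePoly_succ_mulDeriv_twist {N : ℕ} {q : Y × U → H}
    (ha : ∀ h, PhasePoly (skewProduct S ρ) (ν.prod mU) N (mulDeriv (twist (mulDeriv (S h) σ)) q))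
    (hb : ∀ h, PhasePoly (skewProduct S ρ) (ν.prod mU) N
      (mulDeriv (twist σ) (mulDeriv (twist (mulDeriv (S h) σ)) q)))
    (hc : ∀ h, PhasePoly (skewProduct S ρ) (ν.prod mU) N
      (mulDeriv (twist (mulDeriv (S h) σ * σ)) (mulDeriv (skewProduct S ρ h) q))) :
    PhasePoly (skewProduct S ρ) (ν.prod mU) (N + 1) (mulDeriv (twist σ) q) :=
  phasePoly_succ_iff.2 fun h => by
    rw [mulDeriv_skewProduct_mulDeriv_twist]
    exact ((hc h).mul (hb h)).mul (ha h)

variable [MeasurableMul₂ U]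

lemma measurable_twist (hσ : Measurable σ) : Measurable (twist σ) :=
  measurable_fst.prodMk ((hσ.comp measurable_fst).mul measurable_snd)

variable [SFinite ν] [SFinite mU] [mU.IsMulLeftInvariant]

lemma measurePreserving_twist (hσ : Measurable σ) :
    MeasurePreserving (twist σ) (ν.prod mU) (ν.prod mU) :=
  (MeasurePreserving.id ν).skew_product (g := fun y t => σ y * t)
    ((hσ.comp measurable_fst).mul measurable_snd)
    (ae_of_all _ fun y => map_mul_left_eq_self mU (σ y))

lemma quasiMeasurePreserving_vertRot (u : U) :
    Measure.QuasiMeasurePreserving (vertRot u) (ν.prod mU) (ν.prod mU) :=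
  (measurePreserving_twist measurable_const).quasiMeasurePreserving

lemma measurePreserving_skewProduct {g : G} (hS : MeasurePreserving (S g) ν ν)
    (hρ : Measurable (ρ g)) : MeasurePreserving (skewProduct S ρ g) (ν.prod mU) (ν.prod mU) :=
  hS.skew_product (g := fun y t => ρ g y * t) ((hρ.comp measurable_fst).mul measurable_snd)
    (ae_of_all _ fun y => map_mul_left_eq_self mU (ρ g y))

variable [MeasurableSpace H] [MeasurableEq H] {q r : Y × U → H}

/-- Fubini, after the change of variables `(x, t) ↦ (x.2⁻¹ * t, x)`. -/
lemma ae_section_ae_eq [MeasurableInv U] (hq : Measurable q)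
    (hinv : PhasePoly vertRot (ν.prod mU) 1 q) :
    ∀ᵐ t ∂mU, (fun x => q (x.1, t)) =ᵐ[ν.prod mU] q := by
  have hrot : ∀ᵐ z ∂mU.prod (ν.prod mU), q (vertRot z.1 z.2) = q z.2 := by
    refine (Measure.ae_prod_iff_ae_ae (measurableSet_eq_fun ?_ (hq.comp measurable_snd))).2
      (ae_of_all _ fun u => Eventually.mono (hinv u) fun x hx => mul_inv_eq_one.1 hx)
    exact hq.comp ((measurable_fst.comp measurable_snd).prodMk
      (measurable_fst.mul (measurable_snd.comp measurable_snd)))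
  have hΦ : MeasurePreserving (fun w : (Y × U) × U => (w.1.2⁻¹ * w.2, w.1))
      ((ν.prod mU).prod mU) (mU.prod (ν.prod mU)) :=
    Measure.measurePreserving_swap.comp ((MeasurePreserving.id _).skew_product
      (g := fun (x : Y × U) (t : U) => x.2⁻¹ * t)
      ((measurable_snd.comp measurable_fst).inv.mul measurable_snd)
      (ae_of_all _ fun x => map_mul_left_eq_self mU x.2⁻¹))
  have hsect : ∀ᵐ w ∂(ν.prod mU).prod mU, q (w.1.1, w.2) = q w.1 :=
    Eventually.mono (hΦ.quasiMeasurePreserving.ae hrot) fun w hw => by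
      simpa [mul_comm w.1.2⁻¹, mul_assoc] using hw
  exact Measure.ae_ae_of_ae_prod (Measure.measurePreserving_swap.quasiMeasurePreserving.ae hsect)

variable [MeasurableInv U] [NeZero mU] [MeasurableMul₂ H] [MeasurableInv H]

lemma PhasePoly.mulDeriv_twist {v : ℕ} (hq : Measurable q) (hσ : Measurable σ)
    (h : PhasePoly vertRot (ν.prod mU) (v + 1) q) :
    PhasePoly vertRot (ν.prod mU) v (mulDeriv (twist σ) q) := by
  induction v generalizing q with
  | zero =>
    obtain ⟨t, ht⟩ := (ae_section_ae_eq hq h).exists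
    filter_upwards [ht, (measurePreserving_twist hσ).quasiMeasurePreserving.ae ht] with x hx hσx
    simp_all
  | succ v ih =>
    refine phasePoly_succ_iff.2 fun u => ?_
    rw [mulDeriv_comm fun x => (twist_vertRot u x).symm]
    exact ih (hq.mulDeriv (measurable_twist measurable_const)) (h u)

lemma mulDeriv_twist_ae_eq (hq : Measurable q) (hr : Measurable r) (hσ : Measurable σ)
    (h : PhasePoly vertRot (ν.prod mU) 1 (q / r)) :
    mulDeriv (twist σ) q =ᵐ[ν.prod mU] mulDeriv (twist σ) r := by
  have hqr : mulDeriv (twist σ) q = mulDeriv (twist σ) (q / r) * mulDeriv (twist σ) r := by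
    rw [← mulDeriv_mul, div_mul_cancel]
  filter_upwards [h.mulDeriv_twist (hq.div hr) hσ] with x (hx : mulDeriv (twist σ) (q / r) x = 1)
  rw [hqr, Pi.mul_apply, hx, one_mul]

/-- A bound for the degree of `mulDeriv (twist σ) q` when `q` has vertical degree `< v + 1`,
each `Δ_h q` is a phase polynomial of degree `< d` up to a vertically invariant factor, and `σ`
has degree `< j`. -/
def twistBound : ℕ → ℕ → ℕ → ℕ
  | 0, _, _ => 0
  | _ + 1, 0, _ => 0
  | v + 1, j + 1, 0 =>
      max (twistBound (v + 1) j 0) (twistBound v (j + 1) (twistBound (v + 1) j 0)) + 1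
  | v + 1, j + 1, d + 1 =>
      max (max (twistBound (v + 1) j (d + 1))
        (twistBound v (j + 1) (twistBound (v + 1) j (d + 1)))) (twistBound (v + 1) (j + 1) d) + 1
termination_by v j d => (v, j, d)

/-- A bound for the degree of the sections of a phase polynomial of degree `< d` and vertical
degree `< v + 1`, when the cocycle has degree `< k`. -/
def sectionBound (k : ℕ) : ℕ → ℕ → ℕ
  | 0, d => d
  | _ + 1, 0 => 0
  | v + 1, d + 1 =>
      max (sectionBound k (v + 1) d) (sectionBound k v (twistBound (v + 1) k d)) + 1
termination_by v d => (v, d)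

variable (hS : ∀ g, MeasurePreserving (S g) ν ν) (hρ : ∀ g, Measurable (ρ g))
include hS hρ

theorem phasePoly_skewProduct_mulDeriv_twist :
    ∀ (v j d : ℕ) {q : Y × U → H} {σ : Y → U}, Measurable q → Measurable σ →
      PhasePoly vertRot (ν.prod mU) (v + 1) q →
      (∀ h, PhasePolyModInvariant (skewProduct S ρ) vertRot (ν.prod mU) d
        (mulDeriv (skewProduct S ρ h) q)) →
      PhasePoly S ν j σ →
      PhasePoly (skewProduct S ρ) (ν.prod mU) (twistBound v j d) (mulDeriv (twist σ) q)
  | 0, j, d, q, σ, hq, hσ, hqv, _, _ => by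
    rw [twistBound]
    exact hqv.mulDeriv_twist hq hσ
  | v + 1, 0, d, q, σ, _, _, _, _, hσj => by
    rw [twistBound]
    filter_upwards [Measure.quasiMeasurePreserving_fst.ae hσj] with x hx
    simp [hx]
  | v + 1, j + 1, d, q, σ, hq, hσ, hqv, hqd, hσj => by
    have hT h := (measurePreserving_skewProduct (mU := mU) (hS h) (hρ h)).quasiMeasurePreserving
    have hτ h : Measurable (mulDeriv (S h) σ) := hσ.mulDeriv (hS h).measurable
    have hς h : Measurable (mulDeriv (S h) σ * σ) := (hτ h).mul hσ
    have hMτ h := hq.mulDeriv (measurable_twist (hτ h))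
    have ha h := phasePoly_skewProduct_mulDeriv_twist (v + 1) j d hq (hτ h) hqv hqd (hσj h)
    have hb h := phasePoly_skewProduct_mulDeriv_twist v (j + 1) _ (hMτ h) hσ
      (hqv.mulDeriv_twist hq (hτ h)) (fun g => ((ha h).mulDeriv_self hT g).phasePolyModInvariant
        ((hMτ h).mulDeriv (hT g).measurable)) hσj
    choose r hr hrd hw using hqd
    have hc h : mulDeriv (twist (mulDeriv (S h) σ * σ)) (mulDeriv (skewProduct S ρ h) q)
        =ᵐ[ν.prod mU] mulDeriv (twist (mulDeriv (S h) σ * σ)) (r h) :=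
      mulDeriv_twist_ae_eq (hq.mulDeriv (hT h).measurable) (hr h) (hς h) (hw h)
    cases d with
    | zero =>
      rw [twistBound]
      refine phasePoly_succ_mulDeriv_twist (fun h => (ha h).mono hT (le_max_left _ _))
        (fun h => (hb h).mono hT (le_max_right _ _)) fun h => PhasePoly.mono hT (Nat.zero_le _) ?_
      exact (hc h).trans
        (mulDeriv_ae_eq_one (measurePreserving_twist (hς h)).quasiMeasurePreserving (hrd h))
    | succ e =>
      rw [twistBound]
      refine phasePoly_succ_mulDeriv_twist
        (fun h => (ha h).mono hT ((le_max_left _ _).trans (le_max_left _ _)))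
        (fun h => (hb h).mono hT ((le_max_right _ _).trans (le_max_left _ _)))
        fun h => PhasePoly.mono hT (le_max_right _ _) (PhasePoly.congr hT ?_ (hc h).symm)
      refine phasePoly_skewProduct_mulDeriv_twist (v + 1) (j + 1) e (hr h) (hς h) ?_
        (fun g => (hrd h g).phasePolyModInvariant ((hr h).mulDeriv (hT g).measurable))
        (((hσj h).succ fun g => (hS g).quasiMeasurePreserving).mul hσj)
      exact (hqv.mulDeriv_of_commute (hT h) fun u x => skewProduct_vertRot h u x).of_div
        quasiMeasurePreserving_vertRot (hw h)
termination_by v j d => (v, j, d)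

theorem ae_phasePoly_skewProduct_section [Countable G] {k : ℕ}
    (hρk : ∀ g, PhasePoly S ν k (ρ g)) :
    ∀ (v d : ℕ) {q : Y × U → H}, Measurable q → PhasePoly vertRot (ν.prod mU) (v + 1) q →
      PhasePoly (skewProduct S ρ) (ν.prod mU) d q →
      ∀ᵐ t ∂mU, PhasePoly (skewProduct S ρ) (ν.prod mU) (sectionBound k v d) fun x => q (x.1, t)
  | 0, d, q, hq, hqv, hqd => by
    have hT g := (measurePreserving_skewProduct (mU := mU) (hS g) (hρ g)).quasiMeasurePreserving
    rw [sectionBound]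
    exact Eventually.mono (ae_section_ae_eq hq hqv) fun t ht => hqd.congr hT ht.symm
  | v + 1, 0, q, hq, _, hqd => by
    simpa only [sectionBound] using ae_phasePoly_skewProduct_section hρk 0 0 hq
      (PhasePoly.succ quasiMeasurePreserving_vertRot hqd) hqd
  | v + 1, d + 1, q, hq, hqv, hqd => by
    have hT g := (measurePreserving_skewProduct (mU := mU) (hS g) (hρ g)).quasiMeasurePreserving
    have hΔ h := ae_phasePoly_skewProduct_section hρk (v + 1) d (hq.mulDeriv (hT h).measurable)
      (hqv.mulDeriv_of_commute (hT h) fun u x => skewProduct_vertRot h u x) (hqd h)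
    have hM h : ∀ᵐ t ∂mU, PhasePoly (skewProduct S ρ) (ν.prod mU)
        (sectionBound k v (twistBound (v + 1) k d))
        fun x => mulDeriv (twist (ρ h)⁻¹) (q ∘ skewProduct S ρ h) (x.1, t) := by
      have hqT : Measurable (q ∘ skewProduct S ρ h) := hq.comp (hT h).measurable
      have hqTv := hqv.comp_of_commute (hT h) fun u x => skewProduct_vertRot h u x
      have hqTd : PhasePoly (skewProduct S ρ) (ν.prod mU) (d + 1) (q ∘ skewProduct S ρ h) := by
        rw [← mulDeriv_mul_self]
        exact ((hqd h).succ hT).mul hqd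
      exact ae_phasePoly_skewProduct_section hρk v _ (hqT.mulDeriv (measurable_twist (hρ h).inv))
        (hqTv.mulDeriv_twist hqT (hρ h).inv)
        (phasePoly_skewProduct_mulDeriv_twist hS hρ (v + 1) k d hqT (hρ h).inv hqTv
          (fun g => (hqTd g).phasePolyModInvariant (hqT.mulDeriv (hT g).measurable)) (hρk h).inv)
    filter_upwards [ae_all_iff.2 hΔ, ae_all_iff.2 hM] with t hΔt hMt
    rw [sectionBound]
    refine phasePoly_succ_iff.2 fun h => ?_
    rw [mulDeriv_skewProduct_section]
    exact ((hΔt h).mono hT (le_max_left _ _)).mul ((hMt h).mono hT (le_max_right _ _))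
termination_by v d => (v, d)

variable [Countable G] [IsProbabilityMeasure ν] [IsProbabilityMeasure mU]
  [MeasurableSpace.CountablySeparated H] {k m : ℕ} (hρk : ∀ g, PhasePoly S ν k (ρ g))
  (herg : IsErgodicAction (skewProduct S ρ) (ν.prod mU))
include hρk herg

theorem ae_phasePoly_section_mulDeriv_twist {F : Y × U → H} (hF : Measurable F)
    (hFm : ∀ g, PhasePolyModInvariant (skewProduct S ρ) vertRot (ν.prod mU) m
      (mulDeriv (skewProduct S ρ g) F)) (g : G) :
    ∀ᵐ t ∂mU, PhasePoly (skewProduct S ρ) (ν.prod mU) (sectionBound k m (twistBound (m + 1) k m))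
      fun x => mulDeriv (twist (ρ g)⁻¹) (F ∘ skewProduct S ρ g) (x.1, t) := by
  have hT g := (measurePreserving_skewProduct (mU := mU) (hS g) (hρ g)).quasiMeasurePreserving
  have hVT u g x := (skewProduct_vertRot (S := S) (ρ := ρ) g u x).symm
  have hFv : PhasePoly vertRot (ν.prod mU) (m + 2) F :=
    phasePoly_of_forall_phasePolyModInvariant_mulDeriv herg hT quasiMeasurePreserving_vertRot hVT
      hF hFm
  have hFT : Measurable (F ∘ skewProduct S ρ g) := hF.comp (hT g).measurable
  have hFTv := hFv.comp_of_commute (hT g) fun u x => skewProduct_vertRot g u x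
  have hFTm h : PhasePolyModInvariant (skewProduct S ρ) vertRot (ν.prod mU) m
      (mulDeriv (skewProduct S ρ h) (F ∘ skewProduct S ρ g)) := by
    rw [← mulDeriv_mul_self, mulDeriv_mul]
    exact ((hFm g).mulDeriv_self hT hVT h).mul (hFm h)
  exact ae_phasePoly_skewProduct_section hS hρ hρk m _ (hFT.mulDeriv (measurable_twist (hρ g).inv))
    (hFTv.mulDeriv_twist hFT (hρ g).inv)
    (phasePoly_skewProduct_mulDeriv_twist hS hρ (m + 1) k m hFT (hρ g).inv hFTv hFTm (hρk g).inv)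

theorem ae_phasePoly_div_mulDeriv_section {p : G → Y × U → H} {F : Y × U → H}
    (hp : ∀ g, Measurable (p g)) (hpm : ∀ g, PhasePoly (skewProduct S ρ) (ν.prod mU) m (p g))
    (hF : Measurable F)
    (hf : ∀ g, PhasePoly vertRot (ν.prod mU) 1 (p g * mulDeriv (skewProduct S ρ g) F)) :
    ∀ᵐ t ∂mU, ∀ g, PhasePoly (skewProduct S ρ) (ν.prod mU)
      (max (sectionBound k m m) (sectionBound k m (twistBound (m + 1) k m)))
      (p g * mulDeriv (skewProduct S ρ g) F /
        mulDeriv (skewProduct S ρ g) fun x => F (x.1, t)) := by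
  have hT g := (measurePreserving_skewProduct (mU := mU) (hS g) (hρ g)).quasiMeasurePreserving
  have hpv g : PhasePoly vertRot (ν.prod mU) (m + 1) (p g) :=
    ((hpm g).of_isErgodicAction herg (fun g => (hT g).measurable) quasiMeasurePreserving_vertRot
      (fun u g x => (skewProduct_vertRot g u x).symm) (hp g)).succ quasiMeasurePreserving_vertRot
  have hFm g : PhasePolyModInvariant (skewProduct S ρ) vertRot (ν.prod mU) m
      (mulDeriv (skewProduct S ρ g) F) :=
    ⟨(p g)⁻¹, (hp g).inv, (hpm g).inv, by rw [div_inv_eq_mul, mul_comm]; exact hf g⟩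
  filter_upwards [ae_all_iff.2 fun g =>
      ae_phasePoly_skewProduct_section hS hρ hρk m m (hp g) (hpv g) (hpm g),
    ae_all_iff.2 (ae_phasePoly_section_mulDeriv_twist hS hρ hρk herg hF hFm),
    ae_all_iff.2 fun g => ae_section_ae_eq ((hp g).mul (hF.mulDeriv (hT g).measurable)) (hf g)]
    with t hpt hMt hft g
  refine (((hpt g).mono hT (le_max_left _ _)).mul
    ((hMt g).mono hT (le_max_right _ _)).inv).congr hT ?_
  filter_upwards [hft g] with x hx
  rw [Pi.div_apply, ← hx, mulDeriv_skewProduct_section]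
  simp only [Pi.mul_apply, Pi.inv_apply]
  rw [mul_comm (mulDeriv _ F _), mul_div_mul_right_eq_div, div_eq_mul_inv]

end SkewProduct

/-- Let `Y` be a `G`-system, `U` a compact metrizable abelian group with
Haar probability measure, `ρ : G × Y → U` a cocycle which is a phase polynomial of degree
`< k` (derivatives taken in `U`), and form the skew product `X = Y ×_ρ U` with action
`T_g (y, u) = (S_g y, ρ(g, y) · u)`, assumed ergodic.  If `f(g, x) = p(g, x) · Δ_g F (x)`
with `p` a phase polynomial of degree `< m` and `F` measurable, and `f` is invariant under
all vertical rotations `V_u (y, t) = (y, u·t)`, then there are a constant `C = C(k, m)`, a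
phase polynomial `p'` of degree `< C` and a measurable `F'`, both invariant under all
vertical rotations, with `f(g, x) = p'(g, x) · Δ_g F' (x)`. -/
theorem conze_lesigne_equation_descends_to_factor (k m : ℕ) :
    ∃ C : ℕ,
      ∀ (G : Type) [AddCommGroup G] [Countable G]
        (Y : Type) [MeasurableSpace Y] (ν : Measure Y) [IsProbabilityMeasure ν]
        (S : G → Y → Y),
        (∀ g, MeasurePreserving (S g) ν ν) → S 0 = id →
        (∀ g g', S (g + g') = S g ∘ S g') →
      ∀ (U : Type) [CommGroup U] [TopologicalSpace U] [IsTopologicalGroup U]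
        [CompactSpace U] [TopologicalSpace.MetrizableSpace U]
        [MeasurableSpace U] [BorelSpace U]
        (mU : Measure U) [mU.IsHaarMeasure] [IsProbabilityMeasure mU],
      ∀ (ρ : G → Y → U),
        (∀ g, Measurable (ρ g)) →
        (∀ g g', ∀ᵐ y ∂ν, ρ (g + g') y = ρ g y * ρ g' (S g y)) →
        (∀ g, PhasePoly S ν k (ρ g)) →
      ∀ (T : G → Y × U → Y × U),
        (∀ g x, T g x = (S g x.1, ρ g x.1 * x.2)) →
        IsErgodicAction T (ν.prod mU) →
      ∀ (p : G → Y × U → Circle) (F : Y × U → Circle) (f : G → Y × U → Circle),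
        (∀ g, Measurable (p g)) → Measurable F →
        (∀ g, PhasePoly T (ν.prod mU) m (p g)) →
        (∀ g x, f g x = p g x * (F (T g x) * (F x)⁻¹)) →
        (∀ (u : U) (g : G), ∀ᵐ x ∂ν.prod mU, f g (x.1, u * x.2) = f g x) →
      ∃ (p' : G → Y × U → Circle) (F' : Y × U → Circle),
        (∀ g, Measurable (p' g)) ∧ Measurable F' ∧
        (∀ g, PhasePoly T (ν.prod mU) C (p' g)) ∧
        (∀ (u : U) (g : G), ∀ᵐ x ∂ν.prod mU, p' g (x.1, u * x.2) = p' g x) ∧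
        (∀ u : U, ∀ᵐ x ∂ν.prod mU, F' (x.1, u * x.2) = F' x) ∧
        (∀ g, ∀ᵐ x ∂ν.prod mU, f g x = p' g x * (F' (T g x) * (F' x)⁻¹)) := by
  refine ⟨max (sectionBound k m m) (sectionBound k m (twistBound (m + 1) k m)), ?_⟩
  intro G _ _ Y _ ν _ S hS _ _ U _ _ _ _ _ _ _ mU _ _ ρ hρ _ hρk T hT herg p F f hp hF hpm hf hfinv
  obtain rfl : T = skewProduct S ρ := funext fun g => funext (hT g)
  obtain rfl : f = fun g => p g * mulDeriv (skewProduct S ρ g) F := funext fun g => funext (hf g)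
  have hfv g : PhasePoly vertRot (ν.prod mU) 1 (p g * mulDeriv (skewProduct S ρ g) F) :=
    fun u => Eventually.mono (hfinv u g) fun x hx => mul_inv_eq_one.2 hx
  obtain ⟨t, ht⟩ := (ae_phasePoly_div_mulDeriv_section hS hρ hρk herg hp hpm hF hfv).exists
  have hTm g := (measurePreserving_skewProduct (mU := mU) (hS g) (hρ g)).measurable
  have hFt : Measurable fun x : Y × U => F (x.1, t) :=
    hF.comp (measurable_fst.prodMk measurable_const)
  refine ⟨fun g => p g * mulDeriv (skewProduct S ρ g) F /
      mulDeriv (skewProduct S ρ g) fun x => F (x.1, t), fun x => F (x.1, t), fun g => ?_, hFt, ht,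
    fun u g => ?_, fun u => ae_of_all _ fun _ => rfl,
    fun g => ae_of_all _ fun _ => (div_mul_cancel _ _).symm⟩
  · exact ((hp g).mul (hF.mulDeriv (hTm g))).div (hFt.mulDeriv (hTm g))
  · filter_upwards [hfinv u g] with x hx
    exact congrArg (· / _) hx
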